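/- Let p be a prime and N = pM with p | M. Fix an integer c₀ with gcd(c₀, N) = 1. Suppose that for each j ∈ {0,1,…,p−1} we are given a matrix δ_j = (a_j b_j; j·c_j·M d_j) ∈ Γ₀(M) such that δ_j ≡ I (mod p) entrywise and c_j ≡ c₀ (mod p). Then the coset space Γ∞\Γ₀(M) is the disjoint union over j ∈ {0,1,…,p−1} of the sets of cosets {Γ∞·(γ·δ_j) : γ ∈ Γ₀(N)}. -/

import Mathlib

/-!
For `A ∈ Γ₀(M)` with lower row `(e M, d)`, the residue `φ(A) = e / d mod p` makes sense because
`p ∣ M` forces `d` to be a unit mod `p`. It is a crossed homomorphism on `Γ₀(M)`,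
`φ(A B) = φ(A) B₀₀² + φ(B)`, so it is unchanged by left multiplication with `Γ∞`, vanishes
exactly on `Γ₀(pM)`, and is additive on the right by matrices `≡ I (mod p)`. Hence
`φ(γ δ_j) = j c₀` for `γ ∈ Γ₀(pM)`: different `j` give different cosets since `c₀` is a unit
mod `p`, and `A ∈ Γ₀(pM) δ_j` for the `j` with `j c₀ = φ(A)`.
-/

open Matrix MatrixGroups

local notation "SL2Z" => Matrix.SpecialLinearGroup (Fin 2) ℤ

/-- `Γ₀(K)` as a set of elements of `SL(2,ℤ)`. -/
def Gamma0' (K : ℤ) : Set SL2Z := { γ | K ∣ γ.1 1 0 }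

/-- The translation matrix `T = (1 1; 0 1)`. -/
def Tmat : SL2Z := ⟨!![1, 1; 0, 1], by norm_num [Matrix.det_fin_two_of]⟩

/-- `Γ∞ = {±T^t : t ∈ ℤ}`. -/
def GammaInf : Set SL2Z := { A | ∃ t : ℤ, A = Tmat ^ t ∨ A = -(Tmat ^ t) }

/-- The right coset `Γ∞ · δ`. -/
def cosetOf (δ : SL2Z) : Set SL2Z := { x | ∃ u ∈ GammaInf, x = u * δ }

/-- The coset space `Γ∞ \ Γ₀(K)`, as a set of cosets. -/
def cosets (K : ℤ) : Set (Set SL2Z) := { C | ∃ δ ∈ Gamma0' K, C = cosetOf δ }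

theorem Gamma0'_eq (K : ℤ) : Gamma0' K = CongruenceSubgroup.Gamma0 K.natAbs := by
  ext A
  simp [Gamma0', CongruenceSubgroup.Gamma0_mem, ZMod.intCast_zmod_eq_zero_iff_dvd]

theorem mul_mem_Gamma0' {K : ℤ} {A B : SL2Z} (hA : A ∈ Gamma0' K) (hB : B ∈ Gamma0' K) :
    A * B ∈ Gamma0' K := by
  rw [Gamma0'_eq] at *
  exact mul_mem hA hB

theorem inv_mem_Gamma0' {K : ℤ} {A : SL2Z} (hA : A ∈ Gamma0' K) : A⁻¹ ∈ Gamma0' K := by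
  rw [Gamma0'_eq] at *
  exact inv_mem hA

theorem Gamma0'_mono {K L : ℤ} (h : K ∣ L) : Gamma0' L ⊆ Gamma0' K :=
  fun _ hA ↦ h.trans hA

theorem lower_left_eq_zero_of_mem_GammaInf {u : SL2Z} (hu : u ∈ GammaInf) : u.1 1 0 = 0 := by
  obtain ⟨t, rfl | rfl⟩ := hu <;>
    simp [show Tmat = ModularGroup.T from rfl, ModularGroup.coe_T_zpow]

theorem mem_cosetOf_self (A : SL2Z) : A ∈ cosetOf A :=
  ⟨1, ⟨0, Or.inl (zpow_zero _).symm⟩, (one_mul A).symm⟩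

theorem SL2_mul_apply_one_zero (A B : SL2Z) :
    (A * B).1 1 0 = A.1 1 0 * B.1 0 0 + A.1 1 1 * B.1 1 0 := by
  simp [Matrix.mul_apply, Fin.sum_univ_two]

theorem SL2_mul_apply_one_one (A B : SL2Z) :
    (A * B).1 1 1 = A.1 1 0 * B.1 0 1 + A.1 1 1 * B.1 1 1 := by
  simp [Matrix.mul_apply, Fin.sum_univ_two]

section

variable {p : ℕ} [Fact p.Prime]

theorem intCast_ne_zero_of_gcd_mul_eq_one {c N : ℤ} (h : Int.gcd c (p * N) = 1) :
    (c : ZMod p) ≠ 0 := by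
  rw [Ne, ZMod.intCast_zmod_eq_zero_iff_dvd]
  intro hpc
  have hp1 : (p : ℤ) ∣ (Int.gcd c (p * N) : ℤ) := Int.dvd_coe_gcd hpc (dvd_mul_right _ _)
  rw [h] at hp1
  exact (Fact.out : p.Prime).not_dvd_one (by exact_mod_cast hp1)

/-- On `Γ₀(M)`, where `A` has lower row `(e M, d)`, this is `e / d mod p`; the division by `M`
is exact there. -/
def bottomRatio (p : ℕ) [Fact p.Prime] (M : ℤ) (A : SL2Z) : ZMod p :=
  ((A.1 1 0 / M : ℤ) : ZMod p) / (A.1 1 1 : ZMod p)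

variable {M : ℤ}

theorem bottomRatio_eq {A : SL2Z} {e : ℤ} (hM : M ≠ 0) (he : A.1 1 0 = M * e) :
    bottomRatio p M A = (e : ZMod p) / (A.1 1 1 : ZMod p) := by
  rw [bottomRatio, he, Int.mul_ediv_cancel_left _ hM]

theorem intCast_mul_intCast_eq_one {A : SL2Z} (hA : (p : ℤ) ∣ A.1 1 0) :
    (A.1 0 0 : ZMod p) * (A.1 1 1 : ZMod p) = 1 := by
  have hdet := congrArg (Int.cast : ℤ → ZMod p) (Matrix.det_fin_two A.1 ▸ A.2)
  push_cast at hdet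
  rwa [(ZMod.intCast_zmod_eq_zero_iff_dvd _ _).2 hA, mul_zero, sub_zero] at hdet

theorem intCast_lower_right_ne_zero {A : SL2Z} (hA : (p : ℤ) ∣ A.1 1 0) :
    (A.1 1 1 : ZMod p) ≠ 0 :=
  right_ne_zero_of_mul_eq_one (intCast_mul_intCast_eq_one hA)

theorem bottomRatio_mul (hM : M ≠ 0) (hpM : (p : ℤ) ∣ M) {A B : SL2Z}
    (hA : A ∈ Gamma0' M) (hB : B ∈ Gamma0' M) :
    bottomRatio p M (A * B) = bottomRatio p M A * (B.1 0 0 : ZMod p) ^ 2 + bottomRatio p M B := by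
  obtain ⟨e, he⟩ := hA
  obtain ⟨f, hf⟩ := hB
  have hM0 : (M : ZMod p) = 0 := (ZMod.intCast_zmod_eq_zero_iff_dvd _ _).2 hpM
  have hAB : (A * B).1 1 0 = M * (e * B.1 0 0 + A.1 1 1 * f) := by
    rw [SL2_mul_apply_one_zero, he, hf]; ring
  have hA11 := intCast_lower_right_ne_zero (hpM.trans ⟨e, he⟩)
  have hB11 := intCast_lower_right_ne_zero (hpM.trans ⟨f, hf⟩)
  have hB := intCast_mul_intCast_eq_one (hpM.trans ⟨f, hf⟩)
  rw [bottomRatio_eq hM hAB, bottomRatio_eq hM he, bottomRatio_eq hM hf, SL2_mul_apply_one_one,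
    he]
  push_cast
  rw [hM0]
  field_simp
  linear_combination -((A.1 1 1 : ZMod p) * e * B.1 0 0 * B.1 1 1) * hB

theorem bottomRatio_eq_zero_iff (hM : M ≠ 0) (hpM : (p : ℤ) ∣ M) {A : SL2Z}
    (hA : A ∈ Gamma0' M) : bottomRatio p M A = 0 ↔ A ∈ Gamma0' (p * M) := by
  obtain ⟨e, he⟩ := hA
  rw [bottomRatio_eq hM he, div_eq_zero_iff,
    or_iff_left (intCast_lower_right_ne_zero (hpM.trans ⟨e, he⟩)),
    ZMod.intCast_zmod_eq_zero_iff_dvd, Gamma0', Set.mem_ofPred_eq, he, mul_comm (p : ℤ),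
    mul_dvd_mul_iff_left hM]

theorem bottomRatio_mul_of_intCast_eq_one (hM : M ≠ 0) (hpM : (p : ℤ) ∣ M) {A B : SL2Z}
    (hA : A ∈ Gamma0' M) (hB : B ∈ Gamma0' M) (hB00 : (B.1 0 0 : ZMod p) = 1) :
    bottomRatio p M (A * B) = bottomRatio p M A + bottomRatio p M B := by
  rw [bottomRatio_mul hM hpM hA hB, hB00, one_pow, mul_one]

theorem bottomRatio_eq_of_intCast_eq_one {A : SL2Z} {e : ℤ} (hM : M ≠ 0)
    (he : A.1 1 0 = M * e) (hA11 : (A.1 1 1 : ZMod p) = 1) : bottomRatio p M A = e := by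
  rw [bottomRatio_eq hM he, hA11, div_one]

theorem bottomRatio_mul_of_mem_Gamma0'_mul (hM : M ≠ 0) (hpM : (p : ℤ) ∣ M) {γ B : SL2Z}
    (hγ : γ ∈ Gamma0' (p * M)) (hB : B ∈ Gamma0' M) (hB00 : (B.1 0 0 : ZMod p) = 1) :
    bottomRatio p M (γ * B) = bottomRatio p M B := by
  have hγM : γ ∈ Gamma0' M := Gamma0'_mono (dvd_mul_left _ _) hγ
  rw [bottomRatio_mul_of_intCast_eq_one hM hpM hγM hB hB00,
    (bottomRatio_eq_zero_iff hM hpM hγM).2 hγ, zero_add]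

theorem mul_inv_mem_Gamma0'_mul (hM : M ≠ 0) (hpM : (p : ℤ) ∣ M) {A B : SL2Z}
    (hA : A ∈ Gamma0' M) (hB : B ∈ Gamma0' M) (hB00 : (B.1 0 0 : ZMod p) = 1)
    (hAB : bottomRatio p M A = bottomRatio p M B) : A * B⁻¹ ∈ Gamma0' (p * M) := by
  have hAB' : A * B⁻¹ ∈ Gamma0' M := mul_mem_Gamma0' hA (inv_mem_Gamma0' hB)
  have hsplit := bottomRatio_mul_of_intCast_eq_one hM hpM hAB' hB hB00
  rw [inv_mul_cancel_right, hAB, right_eq_add] at hsplit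
  exact (bottomRatio_eq_zero_iff hM hpM hAB').1 hsplit

theorem bottomRatio_eq_of_cosetOf_eq (hM : M ≠ 0) (hpM : (p : ℤ) ∣ M) {A B : SL2Z}
    (hB : B ∈ Gamma0' M) (hAB : cosetOf A = cosetOf B) :
    bottomRatio p M A = bottomRatio p M B := by
  obtain ⟨u, hu, rfl⟩ : A ∈ cosetOf B := hAB ▸ mem_cosetOf_self A
  have hu0 : u.1 1 0 = 0 := lower_left_eq_zero_of_mem_GammaInf hu
  have hu' : u ∈ Gamma0' M := by simp [Gamma0', hu0]
  rw [bottomRatio_mul hM hpM hu' hB,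
    (bottomRatio_eq_zero_iff hM hpM hu').2 (by simp [Gamma0', hu0]), zero_mul, zero_add]

end

theorem statement3 (p M : ℕ) (hp : p.Prime) (hM : 0 < M) (hpM : p ∣ M)
    (c₀ : ℤ) (hc₀ : Int.gcd c₀ ((p : ℤ) * M) = 1)
    (δ : ℕ → SL2Z) (c : ℕ → ℤ)
    (hδmem : ∀ j : ℕ, j < p → δ j ∈ Gamma0' (M : ℤ))
    (hδ21 : ∀ j : ℕ, j < p → (δ j).1 1 0 = (j : ℤ) * c j * M)
    (hδI : ∀ j : ℕ, j < p →
        (δ j).1 0 0 ≡ 1 [ZMOD (p : ℤ)] ∧ (δ j).1 0 1 ≡ 0 [ZMOD (p : ℤ)] ∧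
        (δ j).1 1 0 ≡ 0 [ZMOD (p : ℤ)] ∧ (δ j).1 1 1 ≡ 1 [ZMOD (p : ℤ)])
    (hc : ∀ j : ℕ, j < p → c j ≡ c₀ [ZMOD (p : ℤ)]) :
    (cosets (M : ℤ) =
        ⋃ j ∈ Finset.range p,
          { C | ∃ γ ∈ Gamma0' ((p : ℤ) * M), C = cosetOf (γ * δ j) }) ∧
    (∀ i j : ℕ, i < p → j < p → i ≠ j →
        { C | ∃ γ ∈ Gamma0' ((p : ℤ) * M), C = cosetOf (γ * δ i) } ∩
          { C | ∃ γ ∈ Gamma0' ((p : ℤ) * M), C = cosetOf (γ * δ j) } = ∅) := by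
  have : Fact p.Prime := ⟨hp⟩
  have hM0 : (M : ℤ) ≠ 0 := by exact_mod_cast hM.ne'
  have hpM' : (p : ℤ) ∣ M := by exact_mod_cast hpM
  have hc₀p : (c₀ : ZMod p) ≠ 0 := intCast_ne_zero_of_gcd_mul_eq_one hc₀
  have hδ00 : ∀ j < p, ((δ j).1 0 0 : ZMod p) = 1 := fun j hj ↦ by
    simpa using (ZMod.intCast_eq_intCast_iff _ _ _).2 (hδI j hj).1
  have ratio_δ : ∀ j < p, bottomRatio p M (δ j) = j * c₀ := by
    intro j hj
    rw [bottomRatio_eq_of_intCast_eq_one (e := j * c j) hM0 (by rw [hδ21 j hj]; ring)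
        (by simpa using (ZMod.intCast_eq_intCast_iff _ _ _).2 (hδI j hj).2.2.2)]
    push_cast
    rw [(ZMod.intCast_eq_intCast_iff _ _ _).2 (hc j hj)]
  have ratio : ∀ j < p, ∀ γ ∈ Gamma0' (p * M), bottomRatio p M (γ * δ j) = j * c₀ :=
    fun j hj γ hγ ↦ by
      rw [bottomRatio_mul_of_mem_Gamma0'_mul hM0 hpM' hγ (hδmem j hj) (hδ00 j hj), ratio_δ j hj]
  refine ⟨Set.ext fun C ↦ ⟨?_, ?_⟩, ?_⟩
  · rintro ⟨A, hA, rfl⟩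
    set j := (bottomRatio p M A / c₀).val
    have hj : j < p := ZMod.val_lt _
    have hjA : bottomRatio p M A = bottomRatio p M (δ j) := by
      rw [ratio_δ j hj, ZMod.natCast_zmod_val, div_mul_cancel₀ _ hc₀p]
    simp only [Set.mem_iUnion, Finset.mem_range]
    exact ⟨j, hj, A * (δ j)⁻¹, mul_inv_mem_Gamma0'_mul hM0 hpM' hA (hδmem j hj) (hδ00 j hj) hjA,
      by rw [inv_mul_cancel_right]⟩
  · simp only [Set.mem_iUnion, Finset.mem_range]
    rintro ⟨j, hj, γ, hγ, rfl⟩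
    exact ⟨γ * δ j, mul_mem_Gamma0' (Gamma0'_mono (dvd_mul_left _ _) hγ) (hδmem j hj), rfl⟩
  · rintro i j hi hj hij
    refine Set.eq_empty_of_forall_notMem ?_
    rintro C ⟨⟨γ, hγ, rfl⟩, ⟨γ', hγ', hC⟩⟩
    have hij' : (i : ZMod p) * c₀ = j * c₀ := by
      rw [← ratio i hi γ hγ, ← ratio j hj γ' hγ', bottomRatio_eq_of_cosetOf_eq hM0 hpM'
        (mul_mem_Gamma0' (Gamma0'_mono (dvd_mul_left _ _) hγ') (hδmem j hj)) hC]
    have hij'' := congrArg ZMod.val (mul_right_cancel₀ hc₀p hij')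
    exact hij (by rwa [ZMod.val_cast_of_lt hi, ZMod.val_cast_of_lt hj] at hij'')
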